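/- arXiv:1807.11770 — 3 statements merged into one kernel-verified Lean document; each statement's English description precedes it below -/
import Mathlib

section
/- Let ρ > 0 and for each n ≥ 1 let (cᵢⁿ)_{i≥1} be a sequence of nonnegative reals such that (n/ρ)·cᵢⁿ is a natural number for all i, cᵢⁿ = 0 for i > n, and ∑_{i=1}^{n} i·cᵢⁿ = ρ. Define Rₙ = (ρ/n) · ∑_{i=1}^{n} ( log((n/ρ)cᵢⁿ)! − (n/ρ)cᵢⁿ · log((n/ρ)cᵢⁿ) + (n/ρ)cᵢⁿ ), with the convention 0·log 0 = 0. Then Rₙ → 0 as n → ∞. -/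
/-!
Stirling's bounds `k log k - k ≤ log k! ≤ k log k - k + (log k)/2 + 1` show that each summand
lies in `[0, 1 + (log n)/2]` and vanishes when `m n i = 0`. The indices with `m n i ≠ 0` are
distinct positive integers with sum at most `∑ i m n i = n`, so there are at most `√(2n)` of
them. Hence `R n ≤ ρ √2 (1 + log √n) / √n → 0`.
-/

open Filter Finset Real
open scoped Nat

theorem Stirling.log_factorial_le_stirling {n : ℕ} (hn : n ≠ 0) :
    log n ! ≤ n * log n - n + log n / 2 + 1 := by
  obtain ⟨k, rfl⟩ := Nat.exists_eq_add_one_of_ne_zero hn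
  have h := Stirling.log_stirlingSeq'_antitone (Nat.zero_le k)
  simp only [Function.comp_apply, Stirling.log_stirlingSeq_formula] at h
  push_cast at h ⊢
  have hk : (0 : ℝ) < k + 1 := by positivity
  rw [log_mul two_ne_zero hk.ne', log_div hk.ne' (exp_pos 1).ne', log_exp] at h
  norm_num at h
  linarith

theorem Finset.card_mul_card_add_one_le_two_mul_sum {s : Finset ℕ} (hs : 0 ∉ s) :
    #s * (#s + 1) ≤ 2 * ∑ i ∈ s, i := by
  induction s using Finset.induction_on_max with
  | empty => simp
  | insert a s ha ih =>
    have ha₀ : a ≠ 0 := fun h => hs (h ▸ mem_insert_self a s)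
    have hcard : #s ≤ a - 1 := by
      simpa using card_le_card fun x hx => mem_Ioo.2
        ⟨Nat.pos_of_ne_zero fun h => hs (mem_insert_of_mem (h ▸ hx)), ha x hx⟩
    have hnot : a ∉ s := fun h => lt_irrefl a (ha a h)
    rw [card_insert_of_notMem hnot, sum_insert hnot]
    have := ih fun h => hs (mem_insert_of_mem h)
    have : (#s + 1) * (#s + 1 + 1) = #s * (#s + 1) + 2 * (#s + 1) := by ring
    omega

theorem Finset.card_filter_ne_zero_sq_le {s : Finset ℕ} (hs : 0 ∉ s) (a : ℕ → ℕ) :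
    #{i ∈ s | a i ≠ 0} ^ 2 ≤ 2 * ∑ i ∈ s, i * a i := by
  set t := {i ∈ s | a i ≠ 0}
  calc #t ^ 2 ≤ #t * (#t + 1) := by nlinarith
    _ ≤ 2 * ∑ i ∈ t, i := card_mul_card_add_one_le_two_mul_sum fun h => hs (mem_filter.1 h).1
    _ ≤ 2 * ∑ i ∈ t, i * a i := by
        gcongr with i hi
        exact Nat.le_mul_of_pos_right i (Nat.pos_of_ne_zero (mem_filter.1 hi).2)
    _ ≤ 2 * ∑ i ∈ s, i * a i := by gcongr; exact filter_subset _ _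

noncomputable def stirlingGap (k : ℕ) : ℝ :=
  log k ! - k * log k + k

theorem stirlingGap_zero : stirlingGap 0 = 0 := by simp [stirlingGap]

theorem stirlingGap_nonneg (k : ℕ) : 0 ≤ stirlingGap k := by
  obtain rfl | hk := eq_or_ne k 0
  · simp [stirlingGap]
  have := Stirling.le_log_factorial_stirling hk
  have : 0 ≤ log k := log_natCast_nonneg k
  have : 0 ≤ log (2 * π) := log_nonneg (by linarith [pi_gt_three])
  unfold stirlingGap
  linarith

theorem stirlingGap_le (k : ℕ) : stirlingGap k ≤ log k / 2 + 1 := by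
  obtain rfl | hk := eq_or_ne k 0
  · simp [stirlingGap]
  have := Stirling.log_factorial_le_stirling hk
  unfold stirlingGap
  linarith

theorem sum_stirlingGap_le {a : ℕ → ℕ} {n : ℕ} (h : ∑ i ∈ Icc 1 n, i * a i = n) :
    ∑ i ∈ Icc 1 n, stirlingGap (a i) ≤ √(2 * n) * (log n / 2 + 1) := by
  set t := {i ∈ Icc 1 n | a i ≠ 0}
  have hsupp : ∑ i ∈ Icc 1 n, stirlingGap (a i) = ∑ i ∈ t, stirlingGap (a i) :=
    (sum_filter_of_ne (p := fun i => a i ≠ 0) fun i _ hne h0 =>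
      hne (by rw [h0, stirlingGap_zero])).symm
  have hterm : ∀ i ∈ t, stirlingGap (a i) ≤ log n / 2 + 1 := by
    intro i hi
    obtain ⟨hiI, hai⟩ := mem_filter.1 hi
    have hle : a i ≤ n := calc
      a i ≤ i * a i := Nat.le_mul_of_pos_left _ (mem_Icc.1 hiI).1
      _ ≤ n := h ▸ single_le_sum (f := fun j => j * a j) (fun _ _ => Nat.zero_le _) hiI
    have : log (a i) ≤ log n :=
      log_le_log (by exact_mod_cast Nat.pos_of_ne_zero hai) (by exact_mod_cast hle)
    linarith [stirlingGap_le (a i)]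
  have hcard : (#t : ℝ) ≤ √(2 * n) := by
    refine le_sqrt_of_sq_le ?_
    have := card_filter_ne_zero_sq_le (s := Icc 1 n) (by simp) a
    rw [h] at this
    exact_mod_cast this
  calc ∑ i ∈ Icc 1 n, stirlingGap (a i) = ∑ i ∈ t, stirlingGap (a i) := hsupp
    _ ≤ #t * (log n / 2 + 1) := by simpa only [sum_const, nsmul_eq_mul] using sum_le_sum hterm
    _ ≤ √(2 * n) * (log n / 2 + 1) := by gcongr

theorem tendsto_log_add_one_div_atTop : Tendsto (fun x => (log x + 1) / x) atTop (nhds 0) := by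
  simpa using
    (isLittleO_log_id_atTop.add (Asymptotics.isLittleO_const_id_atTop 1)).tendsto_div_nhds_zero

theorem stmt4_general (ρ : ℝ) (hρ : 0 < ρ) (m : ℕ → ℕ → ℕ)
    (hmass : ∀ n : ℕ, 1 ≤ n →
      ∑ i ∈ Finset.Icc 1 n, (i : ℝ) * ((ρ / (n:ℝ)) * m n i) = ρ) :
    Tendsto (fun n : ℕ =>
        (ρ / n) * ∑ i ∈ Finset.Icc 1 n,
          (Real.log (Nat.factorial (m n i))
            - (m n i : ℝ) * Real.log (m n i) + (m n i : ℝ)))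
      atTop (nhds 0) := by
  have hcount : ∀ n, 1 ≤ n → ∑ i ∈ Icc 1 n, i * m n i = n := by
    intro n hn
    have hn' : (0 : ℝ) < n := by exact_mod_cast hn
    have h := hmass n hn
    simp_rw [mul_left_comm _ (ρ / n), ← mul_sum, div_mul_eq_mul_div, div_eq_iff hn'.ne',
      mul_comm ρ, mul_left_inj' hρ.ne'] at h
    exact_mod_cast h
  have hbound : ∀ᶠ n : ℕ in atTop,
      ρ / n * ∑ i ∈ Icc 1 n, stirlingGap (m n i) ≤ ρ * √2 * ((log √n + 1) / √n) := by
    filter_upwards [eventually_ge_atTop 1] with n hn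
    have hn' : (0 : ℝ) < n := by exact_mod_cast hn
    calc ρ / n * ∑ i ∈ Icc 1 n, stirlingGap (m n i)
        ≤ ρ / n * (√(2 * n) * (log n / 2 + 1)) := by
          gcongr; exact sum_stirlingGap_le (hcount n hn)
      _ = ρ * √2 * ((log √n + 1) / √n) := by
        rw [log_sqrt hn'.le, sqrt_mul zero_le_two]
        nth_rewrite 1 [← mul_self_sqrt hn'.le]
        field_simp
  have hlim : Tendsto (fun n : ℕ => ρ * √2 * ((log √n + 1) / √n)) atTop (nhds 0) := by
    simpa using (tendsto_log_add_one_div_atTop.comp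
      (tendsto_sqrt_atTop.comp tendsto_natCast_atTop_atTop)).const_mul (ρ * √2)
  exact squeeze_zero' (Eventually.of_forall fun n =>
    mul_nonneg (by positivity) (sum_nonneg fun i _ => stirlingGap_nonneg _)) hbound hlim

/-- Stirling remainder along states of E_ρ^n tends to 0.
The state cⁿ is encoded by the natural numbers m n i = (n/ρ)·cᵢⁿ. -/
theorem stmt4 (ρ : ℝ) (hρ : 0 < ρ) (m : ℕ → ℕ → ℕ)
    (hsupp : ∀ n : ℕ, 1 ≤ n → ∀ i, n < i → m n i = 0)
    (hmass : ∀ n : ℕ, 1 ≤ n →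
      ∑ i ∈ Finset.Icc 1 n, (i : ℝ) * ((ρ / (n:ℝ)) * m n i) = ρ) :
    Tendsto (fun n : ℕ =>
        (ρ / n) * ∑ i ∈ Finset.Icc 1 n,
          (Real.log (Nat.factorial (m n i))
            - (m n i : ℝ) * Real.log (m n i) + (m n i : ℝ)))
      atTop (nhds 0) :=
  stmt4_general ρ hρ m hmass
end

section
/- Let ρ > 0, and let cⁿ, c ∈ X⁺ (nonnegative sequences with ∑ i·cᵢ < ∞) satisfy ‖cⁿ‖ = ‖c‖ = ρ for all n, where ‖c‖ = ∑_{i≥1} i·cᵢ. If cᵢⁿ → cᵢ for every i (componentwise convergence), then ‖cⁿ − c‖ → 0 (strong convergence in the weighted ℓ¹ norm). -/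
open Filter

/-- Scheffé-type lemma in the weighted ℓ¹ space: equal masses plus
componentwise convergence imply strong convergence. -/
theorem stmt7 (ρ : ℝ) (hρ : 0 < ρ) (c : ℕ → ℝ) (cs : ℕ → ℕ → ℝ)
    (hc_nonneg : ∀ i, 0 ≤ c i) (hcs_nonneg : ∀ n i, 0 ≤ cs n i)
    (hc_sum : Summable (fun i : ℕ => (i : ℝ) * c i))
    (hcs_sum : ∀ n, Summable (fun i : ℕ => (i : ℝ) * cs n i))
    (hc_mass : ∑' i : ℕ, (i : ℝ) * c i = ρ)
    (hcs_mass : ∀ n, ∑' i : ℕ, (i : ℝ) * cs n i = ρ)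
    (hpointwise : ∀ i, Tendsto (fun n => cs n i) atTop (nhds (c i))) :
    Tendsto (fun n : ℕ => ∑' i : ℕ, (i : ℝ) * |cs n i - c i|) atTop (nhds 0) := by
  -- minimum sequences
  set m : ℕ → ℕ → ℝ := fun n i => min (cs n i) (c i) with hm
  have hmsum : ∀ n, Summable (fun i : ℕ => (i : ℝ) * m n i) := by
    intro n
    refine Summable.of_nonneg_of_le (fun i => ?_) (fun i => ?_) hc_sum
    · exact mul_nonneg (Nat.cast_nonneg i) (le_min (hcs_nonneg n i) (hc_nonneg i))
    · exact mul_le_mul_of_nonneg_left (min_le_right _ _) (Nat.cast_nonneg i)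
  -- dominated convergence for the minimum
  have hmlim : Tendsto (fun n => ∑' i : ℕ, (i : ℝ) * m n i) atTop (nhds ρ) := by
    rw [← hc_mass]
    apply tendsto_tsum_of_dominated_convergence hc_sum
    · intro i
      have := (Tendsto.min (hpointwise i) (tendsto_const_nhds (x := c i))).const_mul (i : ℝ)
      simpa [hm, min_self] using this
    · filter_upwards with n i
      rw [Real.norm_eq_abs, abs_of_nonneg
        (mul_nonneg (Nat.cast_nonneg i) (le_min (hcs_nonneg n i) (hc_nonneg i)))]
      exact mul_le_mul_of_nonneg_left (min_le_right _ _) (Nat.cast_nonneg i)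
  -- identity: i*|cs - c| = i*cs + i*c - 2*(i*min)
  have key : ∀ n, (∑' i : ℕ, (i : ℝ) * |cs n i - c i|)
      = ρ + ρ - 2 * ∑' i : ℕ, (i : ℝ) * m n i := by
    intro n
    have hid : ∀ i : ℕ, (i : ℝ) * |cs n i - c i|
        = ((i : ℝ) * cs n i + (i : ℝ) * c i) - 2 * ((i : ℝ) * m n i) := by
      intro i
      have : |cs n i - c i| = cs n i + c i - 2 * min (cs n i) (c i) := by
        rcases le_total (cs n i) (c i) with h | h
        · rw [abs_of_nonpos (by linarith), min_eq_left h]; ring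
        · rw [abs_of_nonneg (by linarith), min_eq_right h]; ring
      rw [this]; ring
    calc (∑' i : ℕ, (i : ℝ) * |cs n i - c i|)
        = ∑' i : ℕ, (((i : ℝ) * cs n i + (i : ℝ) * c i) - 2 * ((i : ℝ) * m n i)) := by
          exact tsum_congr hid
      _ = (∑' i : ℕ, ((i : ℝ) * cs n i + (i : ℝ) * c i))
            - ∑' i : ℕ, 2 * ((i : ℝ) * m n i) := by
          exact Summable.tsum_sub ((hcs_sum n).add hc_sum) ((hmsum n).mul_left 2)
      _ = ρ + ρ - 2 * ∑' i : ℕ, (i : ℝ) * m n i := by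
          rw [Summable.tsum_add (hcs_sum n) hc_sum, hcs_mass n, hc_mass, tsum_mul_left]
  simp only [key]
  have : (0 : ℝ) = ρ + ρ - 2 * ρ := by ring
  rw [this]
  exact (tendsto_const_nhds.sub (hmlim.const_mul 2))
end

section
/- Fix ρ > 0, n ≥ 1, z > 0 and strictly positive rates (aᵢ)_{i≥1}, (bᵢ)_{i≥2}, with Q₁ = 1 and Qᵢ = ∏_{j=1}^{i-1} aⱼ/bⱼ₊₁ for i ≥ 2. Define Π(c) = (1/B) ∏_{i=1}^{n} ((n/ρ)Qᵢzⁱ)^{(n/ρ)cᵢ}/((n/ρ)cᵢ)! · e^{−(n/ρ)Qᵢzⁱ} for c in E_ρ^n (B a normalizing constant), and transition rates A₁(c) = a₁c₁(c₁ − ρ/n), Aᵢ(c) = aᵢc₁cᵢ for i ≥ 2, Bᵢ(c) = bᵢcᵢ for i ≥ 2, with jump vector Δᵢ = e_{i+1} − eᵢ − e₁. Then the detailed balance condition holds: for all c ∈ E_ρ^n and i ≥ 1, Aᵢ(c)·Π(c) = B_{i+1}(c + (ρ/n)Δᵢ)·Π(c + (ρ/n)Δᵢ). -/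
/-!
Write a state as `c = (ρ/n) m` with cluster counts `m j ∈ ℕ`. Then `Π` is `B⁻¹` times a product
of Poisson weights `w(λⱼ, mⱼ)` with means `λⱼ = (n/ρ) Qⱼ zʲ`, and `(k + 1) w(λ, k + 1) = λ w(λ, k)`.
If `Aᵢ(c) ≠ 0`, then `m = q + eᵢ + e₁` for counts `q` and the jump leads to `q + eᵢ₊₁`; both sides
of the balance equation reduce to multiples of `w(q)`, which agree because `bᵢ₊₁ Qᵢ₊₁ = aᵢ Qᵢ`.
If `Aᵢ(c) = 0`, the jump creates a negative count, so `Π` vanishes at the target state.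
-/

open Classical

/-- Membership in the state space E_ρ^n. -/
def memE (ρ : ℝ) (n : ℕ) (c : ℕ → ℝ) : Prop :=
  (∀ i : ℕ, ∃ k : ℕ, ((n : ℝ) / ρ) * c i = k) ∧
  (∀ i : ℕ, n < i → c i = 0) ∧
  (∑' i : ℕ, (i : ℝ) * c i = ρ)

open Classical in
/-- The stationary distribution candidate Π (unnormalized by B), extended by 0 outside
E_ρ^n; factorials of the real quantities (n/ρ)cᵢ are expressed via the Gamma function. -/
noncomputable def PiDist (ρ z B : ℝ) (n : ℕ) (Q : ℕ → ℝ) (c : ℕ → ℝ) : ℝ :=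
  if memE ρ n c then
    (1 / B) * ∏ i ∈ Finset.Icc 1 n,
      ((((n : ℝ) / ρ) * Q i * z ^ i) ^ (((n : ℝ) / ρ) * c i)
        / Real.Gamma (((n : ℝ) / ρ) * c i + 1)
        * Real.exp (-(((n : ℝ) / ρ) * Q i * z ^ i)))
  else 0

open Finset

noncomputable def poissonWeight (r : ℝ) (k : ℕ) : ℝ := r ^ k / k.factorial * Real.exp (-r)

lemma poissonWeight_succ_mul (r : ℝ) (k : ℕ) :
    ((k : ℝ) + 1) * poissonWeight r (k + 1) = r * poissonWeight r k := by
  unfold poissonWeight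
  rw [Nat.factorial_succ, pow_succ]
  push_cast
  field_simp

lemma prod_poissonWeight_add_single {α : Type*} [DecidableEq α] {s : Finset α} {k : α}
    (hk : k ∈ s) (r : α → ℝ) (m : α → ℕ) :
    ((m k : ℝ) + 1) * ∏ j ∈ s, poissonWeight (r j) ((m + Pi.single k 1 : α → ℕ) j)
      = r k * ∏ j ∈ s, poissonWeight (r j) (m j) := by
  have hrest : ∏ j ∈ s.erase k, poissonWeight (r j) ((m + Pi.single k 1 : α → ℕ) j)
      = ∏ j ∈ s.erase k, poissonWeight (r j) (m j) :=
    prod_congr rfl fun j hj => by simp [ne_of_mem_erase hj]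
  rw [← mul_prod_erase s _ hk, ← mul_prod_erase s _ hk, hrest, ← mul_assoc, ← mul_assoc]
  simp [poissonWeight_succ_mul]

lemma exists_eq_add_single {α : Type*} [DecidableEq α] {m : α → ℕ} {k : α} (hk : m k ≠ 0) :
    ∃ p : α → ℕ, m = p + Pi.single k 1 := by
  refine ⟨m - Pi.single k 1, funext fun j => ?_⟩
  by_cases hj : j = k
  · subst hj
    simp only [Pi.add_apply, Pi.sub_apply, Pi.single_eq_same]
    omega
  · simp [hj]

lemma sum_range_mul_add_single {N k : ℕ} (hk : k < N) (m : ℕ → ℕ) :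
    ∑ j ∈ range N, j * (m + Pi.single k 1 : ℕ → ℕ) j = ∑ j ∈ range N, j * m j + k := by
  simp [mul_add, sum_add_distrib, Pi.single_apply, hk]

-- The state `c` with `(n / ρ) * c j = m j`: `m j` is the number of clusters of size `j`.
noncomputable def ofCounts (ρ : ℝ) (n : ℕ) (m : ℕ → ℕ) (j : ℕ) : ℝ := ρ / n * m j

section counts

variable {ρ : ℝ} {n : ℕ}

lemma mul_ofCounts (hρ : ρ ≠ 0) (hn : n ≠ 0) (m : ℕ → ℕ) (j : ℕ) :
    (n : ℝ) / ρ * ofCounts ρ n m j = m j := by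
  rw [ofCounts]
  field_simp

lemma exists_ofCounts_of_memE (hρ : ρ ≠ 0) (hn : n ≠ 0) {c : ℕ → ℝ} (hc : memE ρ n c) :
    ∃ m, c = ofCounts ρ n m := by
  choose m hm using hc.1
  refine ⟨m, funext fun j => ?_⟩
  rw [ofCounts, ← hm j]
  field_simp

lemma memE_ofCounts_iff (hρ : ρ ≠ 0) (hn : n ≠ 0) (m : ℕ → ℕ) :
    memE ρ n (ofCounts ρ n m) ↔
      (∀ j, n < j → m j = 0) ∧ ∑ j ∈ range (n + 1), j * m j = n := by
  have hscale : ρ / n ≠ 0 := div_ne_zero hρ (Nat.cast_ne_zero.mpr hn)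
  have hsupp : (∀ j, n < j → ofCounts ρ n m j = 0) ↔ ∀ j, n < j → m j = 0 := by
    simp [ofCounts, hscale]
  rw [memE, and_iff_right fun j => ⟨m j, mul_ofCounts hρ hn m j⟩, hsupp]
  refine and_congr_right fun hm => ?_
  rw [tsum_eq_sum (s := range (n + 1)) fun j hj => by
    simp [ofCounts, hm j (by simpa using hj)]]
  simp_rw [ofCounts, mul_left_comm _ (ρ / n), ← mul_sum]
  rw [div_mul_eq_mul_div, div_eq_iff (Nat.cast_ne_zero.mpr hn), mul_right_inj' hρ]
  exact_mod_cast Iff.rfl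

lemma not_memE_of_mul_neg {c : ℕ → ℝ} {j : ℕ} (hj : (n : ℝ) / ρ * c j < 0) :
    ¬ memE ρ n c := fun hc => by
  obtain ⟨k, hk⟩ := hc.1 j
  exact (Nat.cast_nonneg k).not_gt (hk ▸ hj)

lemma memE_ofCounts_add_single_succ (hρ : ρ ≠ 0) (hn : n ≠ 0) {q : ℕ → ℕ} {i : ℕ}
    (hc : memE ρ n (ofCounts ρ n (q + Pi.single i 1 + Pi.single 1 1))) :
    i + 1 ≤ n ∧ memE ρ n (ofCounts ρ n (q + Pi.single (i + 1) 1)) := by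
  rw [memE_ofCounts_iff hρ hn] at hc ⊢
  obtain ⟨hsupp, hsum⟩ := hc
  have hin : i ≤ n := by
    by_contra! h
    simpa using hsupp i h
  rw [sum_range_mul_add_single (by omega), sum_range_mul_add_single (by omega)] at hsum
  refine ⟨by omega, fun j hj => ?_, ?_⟩
  · have hqj := hsupp j hj
    simp only [Pi.add_apply, Pi.single_apply] at hqj ⊢
    split_ifs at hqj ⊢ <;> omega
  · rw [sum_range_mul_add_single (by omega)]
    omega

lemma PiDist_ofCounts {z B : ℝ} {Q : ℕ → ℝ} (hρ : ρ ≠ 0) (hn : n ≠ 0) {m : ℕ → ℕ}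
    (hm : memE ρ n (ofCounts ρ n m)) :
    PiDist ρ z B n Q (ofCounts ρ n m)
      = B⁻¹ * ∏ j ∈ Icc 1 n, poissonWeight ((n : ℝ) / ρ * Q j * z ^ j) (m j) := by
  rw [PiDist, if_pos hm, one_div]
  refine congrArg _ (prod_congr rfl fun j _ => ?_)
  rw [mul_ofCounts hρ hn, Real.rpow_natCast, Real.Gamma_nat_eq_factorial, poissonWeight]

end counts

noncomputable def coagulationRate (a : ℕ → ℝ) (ρ : ℝ) (n : ℕ) (c : ℕ → ℝ) (i : ℕ) : ℝ :=
  if i = 1 then a 1 * (c 1 * (c 1 - ρ / n)) else a i * (c 1 * c i)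

noncomputable def coagulate (ρ : ℝ) (n : ℕ) (c : ℕ → ℝ) (i : ℕ) : ℕ → ℝ :=
  fun j => c j + (ρ / n) *
    ((if j = i + 1 then (1:ℝ) else 0) - (if j = i then 1 else 0) - (if j = 1 then 1 else 0))

def DetailedBalanceAt (a b : ℕ → ℝ) (ρ z B : ℝ) (n : ℕ) (Q c : ℕ → ℝ) (i : ℕ) : Prop :=
  coagulationRate a ρ n c i * PiDist ρ z B n Q c
    = b (i + 1) * coagulate ρ n c i (i + 1) * PiDist ρ z B n Q (coagulate ρ n c i)

section coagulation

variable {ρ : ℝ} {n : ℕ}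

lemma coagulationRate_ofCounts_add_single (a : ℕ → ℝ) (p : ℕ → ℕ) (i : ℕ) :
    coagulationRate a ρ n (ofCounts ρ n (p + Pi.single 1 1)) i
      = a i * (ρ / n * (p 1 + 1)) * (ρ / n * p i) := by
  rcases eq_or_ne i 1 with rfl | hi
  · simp [coagulationRate, ofCounts]
    ring
  · simp [coagulationRate, ofCounts, hi]
    ring

lemma mul_coagulate_ofCounts (hρ : ρ ≠ 0) (hn : n ≠ 0) (m : ℕ → ℕ) (i j : ℕ) :
    (n : ℝ) / ρ * coagulate ρ n (ofCounts ρ n m) i j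
      = m j + ((if j = i + 1 then (1:ℝ) else 0) - (if j = i then 1 else 0)
        - (if j = 1 then 1 else 0)) := by
  rw [coagulate, mul_add, mul_ofCounts hρ hn, ← mul_assoc, div_mul_div_cancel₀ hρ,
    div_self (Nat.cast_ne_zero.mpr hn), one_mul]

lemma coagulate_ofCounts_add_single_add_single {i : ℕ} (hi : 1 ≤ i) (q : ℕ → ℕ) :
    coagulate ρ n (ofCounts ρ n (q + Pi.single i 1 + Pi.single 1 1)) i
      = ofCounts ρ n (q + Pi.single (i + 1) 1) := by
  funext j
  simp only [coagulate, ofCounts, Pi.add_apply, Pi.single_apply]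
  split_ifs <;> first | omega | push_cast; ring

end coagulation

lemma apply_succ_eq_mul_div (a b Q : ℕ → ℝ) (hQ1 : Q 1 = 1)
    (hQ : ∀ i : ℕ, 2 ≤ i → Q i = ∏ j ∈ Icc 1 (i - 1), a j / b (j + 1)) {i : ℕ} (hi : 1 ≤ i) :
    Q (i + 1) = Q i * (a i / b (i + 1)) := by
  obtain rfl | hi := hi.eq_or_lt
  · simp [hQ 2 le_rfl, hQ1]
  · rw [hQ (i + 1) (by omega), hQ i hi, Nat.add_sub_cancel]
    have h := prod_Icc_succ_top (show 1 ≤ i - 1 + 1 by omega) fun j => a j / b (j + 1)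
    rwa [Nat.sub_add_cancel hi.le] at h

section detailedBalance

variable {a b : ℕ → ℝ} {ρ z B : ℝ} {n : ℕ} {Q : ℕ → ℝ}

lemma detailedBalanceAt_of_not_memE {c : ℕ → ℝ} {i : ℕ} (hrate : coagulationRate a ρ n c i = 0)
    (hjump : ¬ memE ρ n (coagulate ρ n c i)) : DetailedBalanceAt a b ρ z B n Q c i := by
  rw [DetailedBalanceAt, hrate, zero_mul, PiDist, if_neg hjump, mul_zero]

lemma detailedBalanceAt_ofCounts (hρ : ρ ≠ 0) (hn : n ≠ 0) {i : ℕ} (hi : 1 ≤ i)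
    (hb : b (i + 1) ≠ 0) (hQ1 : Q 1 = 1) (hQ : Q (i + 1) = Q i * (a i / b (i + 1)))
    {q : ℕ → ℕ} (hc : memE ρ n (ofCounts ρ n (q + Pi.single i 1 + Pi.single 1 1))) :
    DetailedBalanceAt a b ρ z B n Q (ofCounts ρ n (q + Pi.single i 1 + Pi.single 1 1)) i := by
  obtain ⟨hin, hc'⟩ := memE_ofCounts_add_single_succ hρ hn hc
  rw [DetailedBalanceAt, coagulate_ofCounts_add_single_add_single hi,
    coagulationRate_ofCounts_add_single, PiDist_ofCounts hρ hn hc, PiDist_ofCounts hρ hn hc']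
  have hmem : ∀ {k}, 1 ≤ k → k ≤ n → k ∈ Icc 1 n := fun h1 h2 => mem_Icc.mpr ⟨h1, h2⟩
  have hmonomer := prod_poissonWeight_add_single (hmem le_rfl (by omega))
    (fun j => (n : ℝ) / ρ * Q j * z ^ j) (q + Pi.single i 1)
  have hcluster := prod_poissonWeight_add_single (hmem hi (by omega))
    (fun j => (n : ℝ) / ρ * Q j * z ^ j) q
  have hgrown := prod_poissonWeight_add_single (hmem (by omega) hin)
    (fun j => (n : ℝ) / ρ * Q j * z ^ j) q
  simp only [ofCounts, Pi.add_apply, Pi.single_eq_same, Nat.cast_add, Nat.cast_one]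
    at hmonomer hcluster hgrown ⊢
  have hrates : a i * (ρ / n) * ((n : ℝ) / ρ * Q 1 * z ^ 1) * ((n : ℝ) / ρ * Q i * z ^ i)
      = b (i + 1) * ((n : ℝ) / ρ * Q (i + 1) * z ^ (i + 1)) := by
    rw [hQ, hQ1]
    field_simp
    ring
  -- both sides reduce to (ρ/n) B⁻¹ ∏ poissonWeight (q j) times the corresponding side of hrates
  linear_combination (a i * (ρ / n) ^ 2 * B⁻¹ * (q i + 1)) * hmonomer
    + (a i * (ρ / n) ^ 2 * B⁻¹ * ((n : ℝ) / ρ * Q 1 * z ^ 1)) * hcluster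
    - (b (i + 1) * (ρ / n) * B⁻¹) * hgrown
    + ((ρ / n) * B⁻¹ * ∏ j ∈ Icc 1 n, poissonWeight ((n : ℝ) / ρ * Q j * z ^ j) (q j)) * hrates

end detailedBalance

theorem stmt10_general (ρ z B : ℝ) (hρ : 0 < ρ)
    (n : ℕ) (hn : 1 ≤ n)
    (a b : ℕ → ℝ) (hb : ∀ i, 2 ≤ i → 0 < b i)
    (Q : ℕ → ℝ) (hQ1 : Q 1 = 1)
    (hQ : ∀ i : ℕ, 2 ≤ i → Q i = ∏ j ∈ Finset.Icc 1 (i - 1), a j / b (j + 1))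
    (c : ℕ → ℝ) (hc : memE ρ n c) :
    ∀ i : ℕ, 1 ≤ i →
      (if i = 1 then a 1 * (c 1 * (c 1 - ρ / n)) else a i * (c 1 * c i)) * PiDist ρ z B n Q c
      = b (i + 1) *
          ((fun j : ℕ => c j + (ρ / n) *
            ((if j = i + 1 then (1:ℝ) else 0) - (if j = i then 1 else 0)
              - (if j = 1 then 1 else 0))) (i + 1)) *
        PiDist ρ z B n Q
          (fun j : ℕ => c j + (ρ / n) *
            ((if j = i + 1 then (1:ℝ) else 0) - (if j = i then 1 else 0)
              - (if j = 1 then 1 else 0))) := by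
  intro i hi
  have hρ0 : ρ ≠ 0 := hρ.ne'
  have hn0 : n ≠ 0 := by omega
  change DetailedBalanceAt a b ρ z B n Q c i
  obtain ⟨m, rfl⟩ := exists_ofCounts_of_memE hρ0 hn0 hc
  by_cases hm1 : m 1 = 0
  · refine detailedBalanceAt_of_not_memE (by simp [coagulationRate, ofCounts, hm1])
      (not_memE_of_mul_neg (j := 1) ?_)
    rw [mul_coagulate_ofCounts hρ0 hn0, hm1]
    split_ifs <;> norm_num <;> omega
  obtain ⟨p, rfl⟩ := exists_eq_add_single hm1
  by_cases hpi : p i = 0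
  · refine detailedBalanceAt_of_not_memE (by simp [coagulationRate_ofCounts_add_single, hpi])
      (not_memE_of_mul_neg (j := i) ?_)
    rw [mul_coagulate_ofCounts hρ0 hn0]
    simp only [Pi.add_apply, Pi.single_apply, hpi]
    split_ifs <;> norm_num <;> omega
  obtain ⟨q, rfl⟩ := exists_eq_add_single hpi
  exact detailedBalanceAt_ofCounts hρ0 hn0 hi (hb (i + 1) (by omega)).ne' hQ1
    (apply_succ_eq_mul_div a b Q hQ1 hQ hi) hc

/-- detailed balance for the stochastic Becker–Döring process:
Aᵢ(c)·Π(c) = B_{i+1}(c + (ρ/n)Δᵢ)·Π(c + (ρ/n)Δᵢ). -/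
theorem stmt10 (ρ z B : ℝ) (hρ : 0 < ρ) (hz : 0 < z) (hB : 0 < B)
    (n : ℕ) (hn : 1 ≤ n)
    (a b : ℕ → ℝ) (ha : ∀ i, 1 ≤ i → 0 < a i) (hb : ∀ i, 2 ≤ i → 0 < b i)
    (Q : ℕ → ℝ) (hQ1 : Q 1 = 1)
    (hQ : ∀ i : ℕ, 2 ≤ i → Q i = ∏ j ∈ Finset.Icc 1 (i - 1), a j / b (j + 1))
    (c : ℕ → ℝ) (hc : memE ρ n c) :
    ∀ i : ℕ, 1 ≤ i →
      (if i = 1 then a 1 * (c 1 * (c 1 - ρ / n)) else a i * (c 1 * c i)) * PiDist ρ z B n Q c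
      = b (i + 1) *
          ((fun j : ℕ => c j + (ρ / n) *
            ((if j = i + 1 then (1:ℝ) else 0) - (if j = i then 1 else 0)
              - (if j = 1 then 1 else 0))) (i + 1)) *
        PiDist ρ z B n Q
          (fun j : ℕ => c j + (ρ / n) *
            ((if j = i + 1 then (1:ℝ) else 0) - (if j = i then 1 else 0)
              - (if j = 1 then 1 else 0))) :=
  stmt10_general ρ z B hρ n hn a b hb Q hQ1 hQ c hc
end
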